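/- arXiv:1210.7605 — 2 statements merged into one kernel-verified Lean document; each statement's English description precedes it below -/
import Mathlib

section
/- Let S be a subgraph of a graph G and L a list assignment for G. If G is S-critical with respect to L and G = G₁ ∪ G₂ is a union of two subgraphs, then G₁ is ((G₂ ∪ S) ∩ G₁)-critical with respect to (the restriction of) L. -/
open SimpleGraph

/-- An `L`-coloring of the subgraph `H` of `G`: colors from the lists, proper on `H`. -/
def ListColoringOn {V : Type} (G : SimpleGraph V) (L : V → Finset ℕ) (H : G.Subgraph)
    (φ : V → ℕ) : Prop :=
  (∀ v ∈ H.verts, φ v ∈ L v) ∧ ∀ ⦃u w : V⦄, H.Adj u w → φ u ≠ φ w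

/-- The coloring `ψ` of `S` extends to an `L`-coloring of the subgraph `H`. -/
def ExtendsToSub {V : Type} (G : SimpleGraph V) (L : V → Finset ℕ) (S H : G.Subgraph)
    (ψ : V → ℕ) : Prop :=
  ∃ φ : V → ℕ, ListColoringOn G L H φ ∧ ∀ v ∈ S.verts, φ v = ψ v

/-- `Amb` is `S`-critical w.r.t. `L`: every proper subgraph `H` with `S ⊆ H ⊂ Amb` admits an
`L`-coloring of `S` that extends to `H` but not to `Amb`. -/
def IsCriticalRel {V : Type} (G : SimpleGraph V) (L : V → Finset ℕ) (Amb S : G.Subgraph) : Prop :=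
  ∀ H : G.Subgraph, S ≤ H → H < Amb →
    ∃ ψ : V → ℕ, ListColoringOn G L S ψ ∧ ExtendsToSub G L S H ψ ∧ ¬ ExtendsToSub G L S Amb ψ

/-- `G` is `S`-critical with respect to `L`. -/
def IsCriticalSub {V : Type} (G : SimpleGraph V) (L : V → Finset ℕ) (S : G.Subgraph) : Prop :=
  IsCriticalRel G L ⊤ S

/-- The edgeless subgraph on a set `S` of vertices. -/
def vertsSub {V : Type} (G : SimpleGraph V) (S : Set V) : G.Subgraph where
  verts := S
  Adj _ _ := False
  adj_sub h := h.elim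
  edge_vert h := h.elim
  symm := ⟨fun _ _ h => False.elim h⟩

/-- `G` has a proper coloring from the lists `L`. -/
def LColorable {V : Type} (G : SimpleGraph V) (L : V → Finset ℕ) : Prop :=
  ∃ φ : V → ℕ, (∀ v, φ v ∈ L v) ∧ ∀ ⦃u w : V⦄, G.Adj u w → φ u ≠ φ w

/-- Abstract data of a graph embedded in the plane/sphere: the graph, its faces,
the outer face and the vertex–face incidence relation. -/
structure PlaneGraph (V : Type) where
  G : SimpleGraph V
  Face : Type
  outer : Face
  incident : V → Face → Prop

/-!
Write `S' = (G₂ ∪ S) ∩ G₁` and let `S' ⊆ H ⊊ G₁`. Then `H ∪ G₂` contains `S` and is a proper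
subgraph of `G` (otherwise `G₁ ⊆ H ∪ (G₁ ∩ G₂) = H`), so by criticality of `G` some coloring `φ` of
`H ∪ G₂` restricts to a coloring of `S` that does not extend to `G`. The restriction of `φ` to `S'`
extends to `H`; if it extended to a coloring `σ` of `G₁`, then `σ` on `G₁` glued with `φ` on `G₂`
(they agree on `V(G₁) ∩ V(G₂) ⊆ V(S')`) would be a coloring of `G` extending `φ` on `S`.
-/

theorem le_sup_of_le_sup_of_inf_le {α : Type*} [DistribLattice α] {a b c d : α}
    (h : a ≤ b ⊔ c) (h' : a ⊓ b ≤ d) : a ≤ d ⊔ c :=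
  calc a = a ⊓ (b ⊔ c) := (inf_eq_left.2 h).symm
    _ = a ⊓ b ⊔ a ⊓ c := inf_sup_left _ _ _
    _ ≤ d ⊔ c := sup_le_sup h' inf_le_right

theorem sup_lt_top_of_lt_of_inf_le {α : Type*} [DistribLattice α] [BoundedOrder α]
    {a b c : α} (hab : a ⊔ b = ⊤) (hca : c < a) (h : a ⊓ b ≤ c) : c ⊔ b < ⊤ := by
  refine lt_top_iff_ne_top.2 fun hcb => hca.not_ge ?_
  exact le_of_inf_le_sup_le (le_inf h inf_le_right) (by rw [hab, hcb])

namespace ListColoringOn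

variable {V : Type} {G : SimpleGraph V} {L : V → Finset ℕ}

theorem mono {H H' : G.Subgraph} {φ : V → ℕ} (hφ : ListColoringOn G L H φ) (h : H' ≤ H) :
    ListColoringOn G L H' φ :=
  ⟨fun v hv => hφ.1 v (h.1 hv), fun _ _ huw => hφ.2 (h.2 huw)⟩

theorem extendsToSub {S H : G.Subgraph} {φ : V → ℕ} (hφ : ListColoringOn G L H φ) :
    ExtendsToSub G L S H φ :=
  ⟨φ, hφ, fun _ _ => rfl⟩

theorem piecewise_sup {G₁ G₂ : G.Subgraph} {σ φ : V → ℕ} [DecidablePred (· ∈ G₁.verts)]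
    (hσ : ListColoringOn G L G₁ σ) (hφ : ListColoringOn G L G₂ φ)
    (hagree : ∀ v ∈ G₁.verts ∩ G₂.verts, σ v = φ v) :
    ListColoringOn G L (G₁ ⊔ G₂) (G₁.verts.piecewise σ φ) := by
  have on₁ : ∀ v ∈ G₁.verts, G₁.verts.piecewise σ φ v = σ v :=
    fun v hv => Set.piecewise_eq_of_mem _ _ _ hv
  have on₂ : ∀ v ∈ G₂.verts, G₁.verts.piecewise σ φ v = φ v := by
    intro v hv
    by_cases hv₁ : v ∈ G₁.verts
    · rw [on₁ v hv₁, hagree v ⟨hv₁, hv⟩]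
    · exact Set.piecewise_eq_of_notMem _ _ _ hv₁
  refine ⟨?_, ?_⟩
  · rintro v (hv | hv)
    · exact on₁ v hv ▸ hσ.1 v hv
    · exact on₂ v hv ▸ hφ.1 v hv
  · rintro u w (huw | huw)
    · rw [on₁ u huw.fst_mem, on₁ w huw.snd_mem]
      exact hσ.2 huw
    · rw [on₂ u huw.fst_mem, on₂ w huw.snd_mem]
      exact hφ.2 huw

end ListColoringOn

theorem critical_union_general {V : Type} (G : SimpleGraph V) (L : V → Finset ℕ)
    (S G₁ G₂ : G.Subgraph) (hunion : G₁ ⊔ G₂ = ⊤)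
    (hcrit : IsCriticalSub G L S) :
    IsCriticalRel G L G₁ ((G₂ ⊔ S) ⊓ G₁) := by
  classical
  intro H hSH hHG₁
  have hG₁₂H : G₁ ⊓ G₂ ≤ H := (inf_comm G₁ G₂).le.trans ((inf_le_inf_right G₁ le_sup_left).trans hSH)
  have hSHG₂ : S ≤ H ⊔ G₂ := le_sup_of_le_sup_of_inf_le (hunion ▸ le_top)
    ((inf_le_inf_right G₁ le_sup_right).trans hSH)
  obtain ⟨ψ, -, ⟨φ, hφ, hφψ⟩, hψ⟩ :=
    hcrit (H ⊔ G₂) hSHG₂ (sup_lt_top_of_lt_of_inf_le hunion hHG₁ hG₁₂H)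
  refine ⟨φ, hφ.mono (inf_le_left.trans (sup_le le_sup_right hSHG₂)),
    (hφ.mono le_sup_left).extendsToSub, ?_⟩
  rintro ⟨σ, hσ, hσφ⟩
  refine hψ ⟨G₁.verts.piecewise σ φ, ?_, fun v hv => ?_⟩
  · exact hunion ▸ hσ.piecewise_sup (hφ.mono le_sup_right)
      fun v hv => hσφ v ⟨Or.inl hv.2, hv.1⟩
  · by_cases hv₁ : v ∈ G₁.verts
    · rw [Set.piecewise_eq_of_mem _ _ _ hv₁, hσφ v ⟨Or.inr hv, hv₁⟩, hφψ v hv]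
    · rw [Set.piecewise_eq_of_notMem _ _ _ hv₁, hφψ v hv]

/-- If `G` is `S`-critical w.r.t. `L` and `G = G₁ ∪ G₂`, then `G₁` is
`((G₂ ∪ S) ∩ G₁)`-critical w.r.t. (the restriction of) `L`. -/
theorem critical_union {V : Type} (G : SimpleGraph V) (L : V → Finset ℕ)
    (S G₁ G₂ : G.Subgraph) (hunion : G₁ ⊔ G₂ = ⊤)
    (hS : S ≤ ⊤) (hcrit : IsCriticalSub G L S) :
    IsCriticalRel G L G₁ ((G₂ ⊔ S) ⊓ G₁) :=
  critical_union_general G L S G₁ G₂ hunion hcrit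
end

section
/- Let G be a graph and S ⊆ V(G) a set of vertices such that S meets every connected component of G. For i ≥ 0 let S_i be the set of vertices at distance exactly i from S, and let n_i = Σ_{j≥i} |S_j|. Then n_i − n_{i+1} = |S_i| for every i, and if n_i ≤ a·|S_i| for a real a ≥ 1 and all i, then n_i ≤ a·|S|·(1 − 1/a)^i for all i. -/
/-! Since `n_i = |S_i| + n_{i+1}`, the hypothesis `n_i ≤ a |S_i|` gives
`n_{i+1} ≤ (1 - 1/a) n_i`, and iterating from `n_0 ≤ a |S_0|` gives the bound once `S_0 = S`.
That last identity needs every vertex to reach `S`: otherwise the distance is `sInf ∅ = 0`. -/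

open SimpleGraph

/-- The distance from a vertex `v` to a set `S` of vertices: the least graph distance to a
reachable vertex of `S`. -/
noncomputable def distToSet {V : Type} (G : SimpleGraph V) (S : Set V) (v : V) : ℕ :=
  sInf {n : ℕ | ∃ s ∈ S, G.Reachable v s ∧ G.dist v s = n}

theorem ncard_le_eq_ncard_eq_add_ncard_succ_le {V : Type} [Finite V] (f : V → ℕ) (i : ℕ) :
    {v | i ≤ f v}.ncard = {v | f v = i}.ncard + {v | i + 1 ≤ f v}.ncard := by
  have hunion : {v | i ≤ f v} = {v | f v = i} ∪ {v | i + 1 ≤ f v} := by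
    ext v
    simp only [Set.mem_ofPred_eq, Set.mem_union]
    omega
  have hdisj : Disjoint {v | f v = i} {v | i + 1 ≤ f v} :=
    Set.disjoint_left.mpr fun v hv hv' => by simp only [Set.mem_ofPred_eq] at hv hv'; omega
  rw [hunion, Set.ncard_union_eq hdisj]

theorem le_mul_one_sub_inv_pow {n b : ℕ → ℝ} {a : ℝ} (ha : 1 ≤ a)
    (hstep : ∀ i, n (i + 1) ≤ n i - b i) (hb : ∀ i, n i ≤ a * b i) (i : ℕ) :
    n i ≤ n 0 * (1 - 1 / a) ^ i := by
  have ha0 : 0 < a := one_pos.trans_le ha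
  have hratio : 0 ≤ 1 - 1 / a := sub_nonneg.mpr ((div_le_one ha0).mpr ha)
  induction i with
  | zero => simp
  | succ i ih =>
    have hdrop : n i / a ≤ b i := (div_le_iff₀ ha0).mpr (by linarith [hb i])
    calc n (i + 1) ≤ n i * (1 - 1 / a) := by
          rw [mul_one_sub, mul_one_div]; linarith [hstep i]
      _ ≤ n 0 * (1 - 1 / a) ^ i * (1 - 1 / a) := mul_le_mul_of_nonneg_right ih hratio
      _ = n 0 * (1 - 1 / a) ^ (i + 1) := by ring

theorem distToSet_eq_zero_iff {V : Type} {G : SimpleGraph V} {S : Set V} {v : V}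
    (hv : ∃ s ∈ S, G.Reachable v s) : distToSet G S v = 0 ↔ v ∈ S := by
  constructor
  · intro h0
    obtain ⟨s, hs, hr⟩ := hv
    have hmem := Nat.sInf_mem (⟨G.dist v s, s, hs, hr, rfl⟩ :
      {n : ℕ | ∃ s ∈ S, G.Reachable v s ∧ G.dist v s = n}.Nonempty)
    obtain ⟨t, ht, hrt, hd⟩ := hmem
    rw [← distToSet, h0] at hd
    rwa [hrt.dist_eq_zero_iff.mp hd]
  · intro hvS
    exact Nat.le_zero.mp (Nat.sInf_le ⟨v, hvS, Reachable.refl v, dist_self⟩)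

/-- Layered counting: with `S_i` the vertices at distance exactly `i` from `S`
and `n_i = Σ_{j ≥ i} |S_j|`, we have `n_i − n_{i+1} = |S_i|`; and if `n_i ≤ a |S_i|` for all `i`
with `a ≥ 1`, then `n_i ≤ a |S| (1 − 1/a)^i`. -/
theorem layered_counting {V : Type} [Fintype V] (G : SimpleGraph V) (S : Finset V)
    (hS : ∀ v : V, ∃ s ∈ S, G.Reachable v s) :
    (∀ i : ℕ,
      {v : V | i ≤ distToSet G ↑S v}.ncard - {v : V | i + 1 ≤ distToSet G ↑S v}.ncard =
        {v : V | distToSet G ↑S v = i}.ncard) ∧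
    (∀ a : ℝ, 1 ≤ a →
      (∀ i : ℕ, ({v : V | i ≤ distToSet G ↑S v}.ncard : ℝ) ≤
        a * {v : V | distToSet G ↑S v = i}.ncard) →
      ∀ i : ℕ, ({v : V | i ≤ distToSet G ↑S v}.ncard : ℝ) ≤
        a * S.card * (1 - 1 / a) ^ i) := by
  set f := distToSet G ↑S
  have hsplit := ncard_le_eq_ncard_eq_add_ncard_succ_le f
  refine ⟨fun i => by rw [hsplit i]; omega, fun a ha hb i => ?_⟩
  have hlayer_zero : {v | f v = 0} = ↑S :=
    Set.ext fun v => distToSet_eq_zero_iff (by simpa using hS v)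
  have hn0 : ({v | 0 ≤ f v}.ncard : ℝ) ≤ a * S.card := by
    simpa [hlayer_zero, Set.ncard_coe_finset] using hb 0
  have hratio : 0 ≤ (1 - 1 / a) ^ i :=
    pow_nonneg (sub_nonneg.mpr ((div_le_one (one_pos.trans_le ha)).mpr ha)) i
  calc ({v | i ≤ f v}.ncard : ℝ) ≤ {v | 0 ≤ f v}.ncard * (1 - 1 / a) ^ i :=
        le_mul_one_sub_inv_pow ha (fun i => by rw [hsplit i]; push_cast; linarith) hb i
    _ ≤ a * S.card * (1 - 1 / a) ^ i := mul_le_mul_of_nonneg_right hn0 hratio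
end
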